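/- arXiv:1712.00897 — 4 statements merged into one kernel-verified Lean document; each statement's English description precedes it below -/
import Mathlib

section
/- If a vector w ∈ ℂ^s satisfies M w = λ w where M = Δt·A + (Δt/(z−1))·e·b^T, and ζ := Δt/λ is such that 1/ζ is not an eigenvalue of A, then R(ζ) = z, where R(ζ) = 1 + ζ·b^T (I − ζA)^{−1} e is the stability function. -/
/-!
Dividing `M w = λ w` by `λ` and writing `ζ = Δt/λ` turns the eigen-equation into
`(I - ζA) w = c e` with `c = ζ (bᵀw)/(z - 1)`. Since `I - ζA` is invertible, `w = c (I - ζA)⁻¹ e`,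
so `c ≠ 0` and pairing with `b` gives `bᵀw = c · bᵀ(I - ζA)⁻¹ e`; substituting the definition of `c`
and cancelling it yields `z - 1 = ζ bᵀ(I - ζA)⁻¹ e`, i.e. `R(ζ) = z`.
-/

open Matrix

variable {n K : Type*} [Fintype n] [DecidableEq n] [Field K]

namespace Matrix

theorem isUnit_det_one_sub_smul {A : Matrix n n K} {ζ : K}
    (h : ∀ v : n → K, v ≠ 0 → A *ᵥ v ≠ (1 / ζ) • v) : IsUnit (1 - ζ • A).det := by
  rw [isUnit_iff_ne_zero]
  intro hdet
  obtain ⟨v, hv0, hv⟩ := exists_mulVec_eq_zero_iff.mpr hdet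
  have hfix : v = ζ • (A *ᵥ v) := by
    rwa [sub_mulVec, one_mulVec, smul_mulVec, sub_eq_zero] at hv
  have hζ : ζ ≠ 0 := by
    rintro rfl
    exact hv0 (by simpa using hfix)
  refine h v hv0 ?_
  conv_rhs => rw [hfix, smul_smul, one_div, inv_mul_cancel₀ hζ, one_smul]

theorem one_sub_smul_mulVec_eq_of_mulVec_eq_smul {A : Matrix n n K} {u b w : n → K}
    {t z lam : K} (hlam : lam ≠ 0)
    (heig : (t • A + (t / (z - 1)) • vecMulVec u b) *ᵥ w = lam • w) :
    (1 - (t / lam) • A) *ᵥ w = ((t / lam) / (z - 1) * (b ⬝ᵥ w)) • u := by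
  rw [add_mulVec, smul_mulVec, smul_mulVec, vecMulVec_mulVec, op_smul_eq_smul, smul_smul]
    at heig
  have hscaled := congrArg (lam⁻¹ • ·) heig
  simp only [smul_add, smul_smul, inv_mul_cancel₀ hlam, one_smul] at hscaled
  rw [show lam⁻¹ * t = t / lam by ring,
    show lam⁻¹ * (t / (z - 1) * (b ⬝ᵥ w)) = t / lam / (z - 1) * (b ⬝ᵥ w) by ring] at hscaled
  rw [sub_mulVec, one_mulVec, smul_mulVec, sub_eq_iff_eq_add']
  exact hscaled.symm

theorem one_add_smul_dotProduct_inv_mulVec_eq {N : Matrix n n K} (hN : IsUnit N.det)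
    {u b w : n → K} {ζ z : K} (hw : w ≠ 0)
    (hNw : N *ᵥ w = (ζ / (z - 1) * (b ⬝ᵥ w)) • u) :
    1 + ζ * (b ⬝ᵥ N⁻¹ *ᵥ u) = z := by
  set c := ζ / (z - 1) * (b ⬝ᵥ w) with hc
  have hw_eq : w = c • (N⁻¹ *ᵥ u) := by
    rw [← mulVec_smul, ← hNw, mulVec_mulVec, nonsing_inv_mul N hN, one_mulVec]
  have hc0 : c ≠ 0 := fun h => hw (by rw [hw_eq, h, zero_smul])
  -- `c ≠ 0` rules out the junk value `ζ / 0 = 0`.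
  have hz : z - 1 ≠ 0 := fun h => hc0 (by rw [hc, h, div_zero, zero_mul])
  have hbw : b ⬝ᵥ w = c * (b ⬝ᵥ N⁻¹ *ᵥ u) := by
    conv_lhs => rw [hw_eq]
    rw [dotProduct_smul, smul_eq_mul]
  have hcz : c * (z - 1) = c * (ζ * (b ⬝ᵥ N⁻¹ *ᵥ u)) := by
    calc c * (z - 1) = ζ * (b ⬝ᵥ w) := by rw [hc]; field_simp
      _ = c * (ζ * (b ⬝ᵥ N⁻¹ *ᵥ u)) := by rw [hbw]; ring
  linear_combination -(mul_left_cancel₀ hc0 hcz)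

end Matrix

theorem eigenvalue_of_M_gives_stability_function_general {s : ℕ}
    (A : Matrix (Fin s) (Fin s) ℂ) (b : Fin s → ℂ)
    (Δt : ℝ) (z : ℂ)
    (M : Matrix (Fin s) (Fin s) ℂ)
    (hM : M = (Δt : ℂ) • A + ((Δt : ℂ) / (z - 1)) • Matrix.vecMulVec (fun _ => 1) b)
    (lam : ℂ) (hlam : lam ≠ 0) (w : Fin s → ℂ) (hw : w ≠ 0)
    (heig : M.mulVec w = lam • w)
    (ζ : ℂ) (hζ : ζ = (Δt : ℂ) / lam)
    (hnoteig : ∀ v : Fin s → ℂ, v ≠ 0 → A.mulVec v ≠ (1 / ζ) • v) :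
    1 + ζ * (b ⬝ᵥ ((1 : Matrix (Fin s) (Fin s) ℂ) - ζ • A)⁻¹.mulVec (fun _ => 1)) = z := by
  subst hM hζ
  exact one_add_smul_dotProduct_inv_mulVec_eq (isUnit_det_one_sub_smul hnoteig) hw
    (one_sub_smul_mulVec_eq_of_mulVec_eq_smul hlam heig)

/-- If `M w = λ w` with `M = Δt·A + (Δt/(z−1))·e bᵀ`, `w ≠ 0`, `λ ≠ 0`, and `1/ζ` (with
`ζ = Δt/λ`) is not an eigenvalue of `A`, then `R(ζ) = z` where
`R(ζ) = 1 + ζ bᵀ (I − ζA)⁻¹ e` is the stability function. -/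
theorem eigenvalue_of_M_gives_stability_function {s : ℕ}
    (A : Matrix (Fin s) (Fin s) ℂ) (b : Fin s → ℂ)
    (Δt : ℝ) (hΔt : 0 < Δt) (z : ℂ) (hz : z ≠ 1)
    (M : Matrix (Fin s) (Fin s) ℂ)
    (hM : M = (Δt : ℂ) • A + ((Δt : ℂ) / (z - 1)) • Matrix.vecMulVec (fun _ => 1) b)
    (lam : ℂ) (hlam : lam ≠ 0) (w : Fin s → ℂ) (hw : w ≠ 0)
    (heig : M.mulVec w = lam • w)
    (ζ : ℂ) (hζ : ζ = (Δt : ℂ) / lam)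
    (hnoteig : ∀ v : Fin s → ℂ, v ≠ 0 → A.mulVec v ≠ (1 / ζ) • v) :
    1 + ζ * (b ⬝ᵥ ((1 : Matrix (Fin s) (Fin s) ℂ) - ζ • A)⁻¹.mulVec (fun _ => 1)) = z :=
  eigenvalue_of_M_gives_stability_function_general A b Δt z M hM lam hlam w hw heig ζ hζ hnoteig
end

section
/- Suppose a Runge-Kutta scheme has weak stage order q̃, i.e., there is a subspace 𝒱 ⊆ ℝ^s with τ^(j) ∈ 𝒱 for 1 ≤ j ≤ q̃, A𝒱 ⊆ 𝒱, and b^T v = 0 for all v ∈ 𝒱. Then for every ζ with I − ζA invertible, W_k(ζ) := b^T (I − ζA)^{−1} τ^(k) = 0 for 1 ≤ k ≤ q̃. -/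
open Matrix

/-- Weak stage order `qwso` implies the Ostermann–Roche condition: for every `ζ` with
`I − ζA` invertible, `W_k(ζ) = bᵀ (I − ζA)⁻¹ τ⁽ᵏ⁾ = 0` for `1 ≤ k ≤ qwso`. -/
theorem weak_stage_order_implies_Wk_vanishes {s : ℕ} (qwso : ℕ)
    (A : Matrix (Fin s) (Fin s) ℝ) (b c : Fin s → ℝ)
    (hc : c = A.mulVec (fun _ => 1))
    (τ : ℕ → Fin s → ℝ)
    (hτ : ∀ m : ℕ, 1 ≤ m →
      τ m = A.mulVec (fun i => (c i) ^ (m - 1)) - (1 / (m : ℝ)) • (fun i => (c i) ^ m))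
    (𝒱 : Submodule ℝ (Fin s → ℝ))
    (hτ𝒱 : ∀ j : ℕ, 1 ≤ j → j ≤ qwso → τ j ∈ 𝒱)
    (hAinv : ∀ v ∈ 𝒱, A.mulVec v ∈ 𝒱)
    (hbperp : ∀ v ∈ 𝒱, b ⬝ᵥ v = 0)
    (ζ : ℂ)
    (hunit : IsUnit ((1 : Matrix (Fin s) (Fin s) ℂ) - ζ • A.map Complex.ofReal))
    (k : ℕ) (hk1 : 1 ≤ k) (hk2 : k ≤ qwso) :
    (fun i => (b i : ℂ)) ⬝ᵥ
      ((1 : Matrix (Fin s) (Fin s) ℂ) - ζ • A.map Complex.ofReal)⁻¹.mulVec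
        (fun i => (τ k i : ℂ)) = 0 := by
  classical
  set M : Matrix (Fin s) (Fin s) ℂ := (1 : Matrix (Fin s) (Fin s) ℂ) - ζ • A.map Complex.ofReal
    with hM
  -- the complexification of 𝒱
  set C : (Fin s → ℝ) → (Fin s → ℂ) := fun v i => (v i : ℂ) with hC
  set 𝒲 : Submodule ℂ (Fin s → ℂ) := Submodule.span ℂ (C '' (𝒱 : Set (Fin s → ℝ))) with h𝒲
  -- key compatibility : complex A applied to real vectors
  have hAC : ∀ v : Fin s → ℝ, (A.map Complex.ofReal).mulVec (C v) = C (A.mulVec v) := by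
    intro v
    funext i
    exact ((Complex.ofRealHom.map_mulVec A v i)).symm
  -- M preserves 𝒲
  have hM𝒲 : ∀ w ∈ 𝒲, M.mulVec w ∈ 𝒲 := by
    intro w hw
    induction hw using Submodule.span_induction with
    | mem x hx =>
        obtain ⟨v, hv, rfl⟩ := hx
        have h1 : M.mulVec (C v) = C v - ζ • C (A.mulVec v) := by
          rw [hM, sub_mulVec, one_mulVec, smul_mulVec, hAC]
        rw [h1]
        have hv1 : C v ∈ 𝒲 := Submodule.subset_span ⟨v, hv, rfl⟩
        have hv2 : C (A.mulVec v) ∈ 𝒲 :=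
          Submodule.subset_span ⟨A.mulVec v, hAinv v hv, rfl⟩
        exact Submodule.sub_mem _ hv1 (Submodule.smul_mem _ _ hv2)
    | zero => simpa using Submodule.zero_mem 𝒲
    | add x y _ _ hx hy => rw [mulVec_add]; exact Submodule.add_mem _ hx hy
    | smul a x _ hx => rw [mulVec_smul]; exact Submodule.smul_mem _ _ hx
  -- M is invertible
  have hdet : IsUnit M.det := (Matrix.isUnit_iff_isUnit_det M).mp hunit
  have hMinv : M⁻¹ * M = 1 := Matrix.nonsing_inv_mul M hdet
  -- restriction of M to 𝒲 is injective, hence surjective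
  let f : 𝒲 →ₗ[ℂ] 𝒲 := (Matrix.mulVecLin M).restrict hM𝒲
  have hfinj : Function.Injective f := by
    intro x y hxy
    have h1 : M.mulVec (x : Fin s → ℂ) = M.mulVec (y : Fin s → ℂ) :=
      congrArg (Subtype.val) hxy
    have h2 : (x : Fin s → ℂ) = (y : Fin s → ℂ) := by
      have := congrArg (fun w => M⁻¹.mulVec w) h1
      simpa [Matrix.mulVec_mulVec, hMinv] using this
    exact Subtype.ext h2
  have hfsurj : Function.Surjective f :=
    (LinearMap.injective_iff_surjective).mp hfinj
  -- τ k complexified is in 𝒲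
  have hτW : C (τ k) ∈ 𝒲 := Submodule.subset_span ⟨τ k, hτ𝒱 k hk1 hk2, rfl⟩
  obtain ⟨w, hw⟩ := hfsurj ⟨C (τ k), hτW⟩
  have hw' : M.mulVec (w : Fin s → ℂ) = C (τ k) := congrArg Subtype.val hw
  -- hence M⁻¹ (C (τ k)) = w
  have hkey : M⁻¹.mulVec (C (τ k)) = (w : Fin s → ℂ) := by
    rw [← hw', Matrix.mulVec_mulVec, hMinv, Matrix.one_mulVec]
  -- b is perpendicular to everything in 𝒲
  have hbperp' : ∀ u ∈ 𝒲, (C b) ⬝ᵥ u = 0 := by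
    intro u hu
    induction hu using Submodule.span_induction with
    | mem x hx =>
        obtain ⟨v, hv, rfl⟩ := hx
        have : (C b) ⬝ᵥ (C v) = ((b ⬝ᵥ v : ℝ) : ℂ) :=
          (Complex.ofRealHom.map_dotProduct b v).symm
        rw [this, hbperp v hv, Complex.ofReal_zero]
    | zero => simp
    | add x y _ _ hx hy => rw [dotProduct_add, hx, hy, add_zero]
    | smul a x _ hx => rw [dotProduct_smul, hx, smul_zero]
  show (C b) ⬝ᵥ M⁻¹.mulVec (C (τ k)) = 0
  rw [hkey]
  exact hbperp' _ w.2
end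

section
/- With T₀ = [e, O_b] as above, the similarity transform of the rank-one matrix e b^T satisfies (T₀^{−1} (e b^T) T₀)_{ij} = δ_{i1}δ_{j1}; consequently, for M* = e b^T + δA, det(M* − δμ I) = δ^{s−1}( det(B − μI) + δ det(A − μI) ), where B = O_b^T Q A O_b. -/
/-!
The matrix `Tinv` with rows `bᵀ` and `O_bᵀ Q` is a left inverse of `T₀ = [e, O_b]`, since
`bᵀe = 1`, `bᵀO_b = 0`, `Qe = 0` and `QO_b = O_b`. Conjugation by `T₀` sends `e bᵀ` to `E₁₁`
(as `Tinv e` and `bᵀ T₀` are both the first unit vector) and `A` to a matrix `C` whose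
lower-right block is `B`. Finally `det (E₁₁ + N) = det N + det N₂₂` by linearity of the
determinant in the first row, applied to `N = δ (C - μ I)`.
-/

open Matrix

namespace Matrix

variable {R : Type*} [CommRing R]

theorem det_conj_of_mul_eq_one_of_card_eq {m n : Type*} [Fintype m] [Fintype n]
    [DecidableEq m] [DecidableEq n] (hcard : Fintype.card m = Fintype.card n)
    {M : Matrix m n R} {M' : Matrix n m R} (h : M * M' = 1) (N : Matrix n n R) :
    det (M * N * M') = det N :=
  det_conj_of_mul_eq_one h ((mul_eq_one_comm_of_card_eq m n R hcard).1 h)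

section Blocks

variable {m : Type*} [Fintype m] [DecidableEq m]

theorem det_single_inl_add (N : Matrix (Unit ⊕ m) (Unit ⊕ m) R) :
    (single (Sum.inl ()) (Sum.inl ()) 1 + N).det = N.toBlocks₂₂.det + N.det := by
  have hrow : single (Sum.inl ()) (Sum.inl ()) 1 + N =
      N.updateRow (Sum.inl ()) (Pi.single (Sum.inl ()) 1 + N (Sum.inl ())) := by
    ext (_ | i) j <;> simp [single_apply, Pi.single_apply, eq_comm]
  have hblocks : N.updateRow (Sum.inl ()) (Pi.single (Sum.inl ()) 1) =
      fromBlocks 1 0 N.toBlocks₂₁ N.toBlocks₂₂ := by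
    ext (_ | i) (_ | j) <;> simp [toBlocks₂₁, toBlocks₂₂]
  rw [hrow, det_updateRow_add, updateRow_eq_self, hblocks, det_fromBlocks_zero₁₂, det_one,
    one_mul]

theorem det_single_inl_add_smul_sub_smul_one (C : Matrix (Unit ⊕ m) (Unit ⊕ m) R) (δ μ : R) :
    (single (Sum.inl ()) (Sum.inl ()) 1 + δ • (C - μ • 1)).det =
      δ ^ Fintype.card m * ((C.toBlocks₂₂ - μ • 1).det + δ * (C - μ • 1).det) := by
  have hblock : (δ • (C - μ • 1)).toBlocks₂₂ = δ • (C.toBlocks₂₂ - μ • 1) := by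
    ext i j
    simp [toBlocks₂₂, one_apply]
  rw [det_single_inl_add, hblock, det_smul, det_smul, Fintype.card_sum, Fintype.card_unit]
  ring

end Blocks

theorem mul_sub_smul_one_mul {l n : Type*} [Fintype n] [DecidableEq l] [DecidableEq n]
    {P : Matrix l n R} {T : Matrix n l R} (h : P * T = 1) (A : Matrix n n R) (c : R) :
    P * (A - c • 1) * T = P * A * T - c • 1 := by
  rw [Matrix.mul_sub, Matrix.sub_mul, Matrix.mul_smul, Matrix.smul_mul, Matrix.mul_one, h]

theorem toBlocks₂₂_fromRows_mul_mul_fromCols {l₁ l₂ n o₁ o₂ : Type*} [Fintype n]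
    (X₁ : Matrix l₁ n R) (X₂ : Matrix l₂ n R) (A : Matrix n n R)
    (Y₁ : Matrix n o₁ R) (Y₂ : Matrix n o₂ R) :
    (fromRows X₁ X₂ * A * fromCols Y₁ Y₂).toBlocks₂₂ = X₂ * A * Y₂ := by
  rw [fromRows_mul, fromRows_mul_fromCols, toBlocks_fromBlocks₂₂]

end Matrix

section RankOneSimilarity

variable {R : Type*} [CommRing R] {n m : Type*} [Fintype n] [DecidableEq n]
  {e b : n → R} {Ob : Matrix n m R}

theorem one_sub_vecMulVec_mulVec_self (hb : b ⬝ᵥ e = 1) : (1 - vecMulVec e b) *ᵥ e = 0 := by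
  rw [sub_mulVec, one_mulVec, vecMulVec_mulVec, hb]
  simp

theorem one_sub_vecMulVec_mul_of_vecMul_eq_zero (hcol : b ᵥ* Ob = 0) :
    (1 - vecMulVec e b) * Ob = Ob := by
  rw [Matrix.sub_mul, Matrix.one_mul, vecMulVec_mul, hcol, sub_eq_self]
  ext
  simp [vecMulVec_apply]

theorem fromRows_mul_fromCols_eq_one [Fintype m] [DecidableEq m] (hb : b ⬝ᵥ e = 1)
    (hcol : b ᵥ* Ob = 0) (horth : Obᵀ * Ob = 1) :
    fromRows (replicateRow Unit b) (Obᵀ * (1 - vecMulVec e b)) *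
      fromCols (replicateCol Unit e) Ob = 1 := by
  rw [fromRows_mul_fromCols, ← fromBlocks_one]
  congr 1
  · ext; simp [hb]
  · rw [← replicateRow_vecMul, hcol, replicateRow_zero]
  · rw [← replicateCol_mulVec, ← mulVec_mulVec, one_sub_vecMulVec_mulVec_self hb, mulVec_zero,
      replicateCol_zero]
  · rw [Matrix.mul_assoc, one_sub_vecMulVec_mul_of_vecMul_eq_zero hcol, horth]

theorem fromRows_mul_vecMulVec_mul_fromCols [DecidableEq m] (hb : b ⬝ᵥ e = 1)
    (hcol : b ᵥ* Ob = 0) :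
    fromRows (replicateRow Unit b) (Obᵀ * (1 - vecMulVec e b)) * vecMulVec e b *
      fromCols (replicateCol Unit e) Ob = single (Sum.inl ()) (Sum.inl ()) 1 := by
  have hleft : fromRows (replicateRow Unit b) (Obᵀ * (1 - vecMulVec e b)) *ᵥ e =
      Pi.single (Sum.inl ()) 1 := by
    rw [fromRows_mulVec, ← mulVec_mulVec, one_sub_vecMulVec_mulVec_self hb, mulVec_zero]
    ext (_ | _) <;> simp [replicateRow_mulVec_eq_const, hb]
  have hright : b ᵥ* fromCols (replicateCol Unit e) Ob = Pi.single (Sum.inl ()) 1 := by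
    rw [vecMul_fromCols, hcol]
    ext (_ | _) <;> simp [mulVec_replicateCol_eq_const, hb]
  rw [mul_vecMulVec, vecMulVec_mul, hleft, hright, single_eq_single_vecMulVec_single]

end RankOneSimilarity

theorem rank_one_similarity_and_det_identity_general {s m : ℕ} (hm : m + 1 = s)
    (b : Fin s → ℝ) (hb : b ⬝ᵥ (fun _ => 1) = 1)
    (Ob : Matrix (Fin s) (Fin m) ℝ)
    (horth : Obᵀ * Ob = 1)
    (hcol : ∀ k : Fin m, b ⬝ᵥ (fun i => Ob i k) = 0)
    (Q : Matrix (Fin s) (Fin s) ℝ)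
    (hQ : Q = 1 - Matrix.vecMulVec (fun _ => 1) b)
    (T₀ : Matrix (Fin s) (Unit ⊕ Fin m) ℝ)
    (hT₀ : T₀ = fun i j => Sum.elim (fun _ => (1 : ℝ)) (fun k => Ob i k) j)
    (Tinv : Matrix (Unit ⊕ Fin m) (Fin s) ℝ)
    (hTinv : Tinv = fun j i => Sum.elim (fun _ => b i) (fun k => (Obᵀ * Q) k i) j)
    (A : Matrix (Fin s) (Fin s) ℝ)
    (B : Matrix (Fin m) (Fin m) ℝ) (hB : B = Obᵀ * Q * A * Ob) :
    ((Tinv * Matrix.vecMulVec (fun _ => 1) b : Matrix (Unit ⊕ Fin m) (Fin s) ℝ) * T₀ =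
      fun i j => if i = Sum.inl () ∧ j = Sum.inl () then (1 : ℝ) else 0) ∧
    (∀ δ μ : ℝ,
      (Matrix.vecMulVec (fun _ => (1 : ℝ)) b + δ • A - (δ * μ) • 1).det =
        δ ^ m * ((B - μ • 1).det + δ * (A - μ • 1).det)) := by
  replace hT₀ : T₀ = fromCols (replicateCol Unit (fun _ => 1)) Ob := hT₀
  replace hTinv : Tinv = fromRows (replicateRow Unit b) (Obᵀ * Q) := by
    rw [hTinv]
    ext (_ | _) _ <;> rfl
  replace hcol : b ᵥ* Ob = 0 := funext hcol
  have hTT : Tinv * T₀ = 1 := by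
    rw [hTinv, hT₀, hQ]
    exact fromRows_mul_fromCols_eq_one hb hcol horth
  have hE : Tinv * vecMulVec (fun _ : Fin s => 1) b * T₀ =
      (single (Sum.inl ()) (Sum.inl ()) 1 : Matrix (Unit ⊕ Fin m) (Unit ⊕ Fin m) ℝ) := by
    rw [hTinv, hT₀, hQ]
    exact fromRows_mul_vecMulVec_mul_fromCols hb hcol
  have hB' : (Tinv * A * T₀).toBlocks₂₂ = B := by
    rw [hTinv, hT₀, hB, toBlocks₂₂_fromRows_mul_mul_fromCols]
  have hdet := det_conj_of_mul_eq_one_of_card_eq (by simp [← hm, add_comm]) hTT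
  refine ⟨hE.trans ?_, fun δ μ => ?_⟩
  · ext i j
    simp [single_apply, eq_comm]
  have hconj : Tinv * (vecMulVec (fun _ => 1) b + δ • (A - μ • 1)) * T₀ =
      single (Sum.inl ()) (Sum.inl ()) (1 : ℝ) + δ • (Tinv * A * T₀ - μ • 1) := by
    rw [Matrix.mul_add, Matrix.add_mul, hE, Matrix.mul_smul, Matrix.smul_mul,
      mul_sub_smul_one_mul hTT]
  calc (vecMulVec (fun _ => 1) b + δ • A - (δ * μ) • 1).det
      = (vecMulVec (fun _ => 1) b + δ • (A - μ • 1)).det := by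
        rw [smul_sub, mul_smul, add_sub_assoc]
    _ = (single (Sum.inl ()) (Sum.inl ()) (1 : ℝ) + δ • (Tinv * A * T₀ - μ • 1)).det := by
        rw [← hconj, hdet]
    _ = δ ^ m * ((B - μ • 1).det + δ * (A - μ • 1).det) := by
        rw [det_single_inl_add_smul_sub_smul_one, Fintype.card_fin, hB',
          ← mul_sub_smul_one_mul hTT, hdet]

/-- With `T₀ = [e, O_b]` as in the previous statement, `T₀⁻¹ (e bᵀ) T₀` has a single nonzero
entry `1` in position `(1,1)`; consequently for `M* = e bᵀ + δA`,
`det(M* − δμ I) = δ^{s−1} ( det(B − μI) + δ det(A − μI) )`, where `B = O_bᵀ Q A O_b`. -/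
theorem rank_one_similarity_and_det_identity {s m : ℕ} (hm : m + 1 = s)
    (b : Fin s → ℝ) (hb : b ⬝ᵥ (fun _ => 1) = 1)
    (Ob : Matrix (Fin s) (Fin m) ℝ)
    (horth : Obᵀ * Ob = 1)
    (hcol : ∀ k : Fin m, b ⬝ᵥ (fun i => Ob i k) = 0)
    (hspan : ∀ v : Fin s → ℝ, b ⬝ᵥ v = 0 →
      v ∈ Submodule.span ℝ (Set.range fun k : Fin m => fun i => Ob i k))
    (Q : Matrix (Fin s) (Fin s) ℝ)
    (hQ : Q = 1 - Matrix.vecMulVec (fun _ => 1) b)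
    (T₀ : Matrix (Fin s) (Unit ⊕ Fin m) ℝ)
    (hT₀ : T₀ = fun i j => Sum.elim (fun _ => (1 : ℝ)) (fun k => Ob i k) j)
    (Tinv : Matrix (Unit ⊕ Fin m) (Fin s) ℝ)
    (hTinv : Tinv = fun j i => Sum.elim (fun _ => b i) (fun k => (Obᵀ * Q) k i) j)
    (A : Matrix (Fin s) (Fin s) ℝ)
    (B : Matrix (Fin m) (Fin m) ℝ) (hB : B = Obᵀ * Q * A * Ob) :
    ((Tinv * Matrix.vecMulVec (fun _ => 1) b : Matrix (Unit ⊕ Fin m) (Fin s) ℝ) * T₀ =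
      fun i j => if i = Sum.inl () ∧ j = Sum.inl () then (1 : ℝ) else 0) ∧
    (∀ δ μ : ℝ,
      (Matrix.vecMulVec (fun _ => (1 : ℝ)) b + δ • A - (δ * μ) • 1).det =
        δ ^ m * ((B - μ • 1).det + δ * (A - μ • 1).det)) :=
  rank_one_similarity_and_det_identity_general hm b hb Ob horth hcol Q hQ T₀ hT₀ Tinv hTinv A B hB
end

section
/- For the Prothero–Robinson model y' = λ(y − φ(t)) + φ'(t), a Runge-Kutta scheme with invertible A and weak stage order q̃ satisfies: the stage-error contribution to the one-step error, ζ b^T (I − ζA)^{−1} τ^(j), vanishes for all 1 ≤ j ≤ q̃ and all ζ for which I − ζA is invertible. -/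
open Matrix

private lemma mulVec_map_ofReal {s : ℕ} (A : Matrix (Fin s) (Fin s) ℝ) (x : Fin s → ℝ) :
    (A.map Complex.ofReal).mulVec (fun i => (x i : ℂ)) = fun i => ((A.mulVec x) i : ℂ) := by
  funext i
  simp [Matrix.mulVec, dotProduct, Matrix.map_apply]

/-- For the Prothero–Robinson model, a Runge-Kutta scheme with invertible `A` and weak
stage order `q̃` has vanishing stage-error contributions to the one-step error:
`ζ bᵀ (I − ζA)⁻¹ τ⁽ʲ⁾ = 0` for all `1 ≤ j ≤ q̃` and all `ζ` with `I − ζA` invertible. -/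
theorem prothero_robinson_stage_error_vanishes {s : ℕ} (qwso : ℕ)
    (A : Matrix (Fin s) (Fin s) ℝ) (b c : Fin s → ℝ) (hA : IsUnit A)
    (hc : c = A.mulVec (fun _ => 1))
    (τ : ℕ → Fin s → ℝ)
    (hτ : ∀ m : ℕ, 1 ≤ m →
      τ m = A.mulVec (fun i => (c i) ^ (m - 1)) - (1 / (m : ℝ)) • (fun i => (c i) ^ m))
    (𝒱 : Submodule ℝ (Fin s → ℝ))
    (hτ𝒱 : ∀ j : ℕ, 1 ≤ j → j ≤ qwso → τ j ∈ 𝒱)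
    (hAinv : ∀ v ∈ 𝒱, A.mulVec v ∈ 𝒱)
    (hbperp : ∀ v ∈ 𝒱, b ⬝ᵥ v = 0) :
    ∀ ζ : ℂ, IsUnit ((1 : Matrix (Fin s) (Fin s) ℂ) - ζ • A.map Complex.ofReal) →
      ∀ j : ℕ, 1 ≤ j → j ≤ qwso →
        ζ * ((fun i => (b i : ℂ)) ⬝ᵥ
          ((1 : Matrix (Fin s) (Fin s) ℂ) - ζ • A.map Complex.ofReal)⁻¹.mulVec
            (fun i => (τ j i : ℂ))) = 0 := by
  intro ζ hM j hj1 hj2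
  set Aℂ := A.map Complex.ofReal with hAℂ
  set M := (1 : Matrix (Fin s) (Fin s) ℂ) - ζ • Aℂ with hMdef
  -- complexification map
  let φ : (Fin s → ℝ) → (Fin s → ℂ) := fun x i => (x i : ℂ)
  -- complexified subspace
  let 𝒲 : Submodule ℂ (Fin s → ℂ) := Submodule.span ℂ (φ '' (𝒱 : Set (Fin s → ℝ)))
  -- Aℂ maps 𝒲 into 𝒲
  have hA𝒲 : ∀ w ∈ 𝒲, Aℂ.mulVec w ∈ 𝒲 := by
    intro w hw
    have : 𝒲 ≤ 𝒲.comap Aℂ.mulVecLin := by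
      rw [Submodule.span_le]
      rintro _ ⟨x, hx, rfl⟩
      have : Aℂ.mulVecLin (φ x) = φ (A.mulVec x) := by
        simp only [Matrix.mulVecLin_apply, hAℂ]; exact mulVec_map_ofReal A x
      show φ x ∈ Submodule.comap Aℂ.mulVecLin 𝒲
      rw [Submodule.mem_comap, this]
      exact Submodule.subset_span ⟨A.mulVec x, hAinv x hx, rfl⟩
    exact this hw
  -- M maps 𝒲 into 𝒲
  have hM𝒲 : ∀ w ∈ 𝒲, M.mulVec w ∈ 𝒲 := by
    intro w hw
    have : M.mulVec w = w - ζ • Aℂ.mulVec w := by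
      rw [hMdef, Matrix.sub_mulVec, Matrix.one_mulVec, Matrix.smul_mulVec]
    rw [this]
    exact Submodule.sub_mem _ hw (Submodule.smul_mem _ _ (hA𝒲 w hw))
  -- M is injective
  have hMinj : Function.Injective M.mulVecLin := by
    intro x y hxy
    have h1 : M⁻¹ * M = 1 := Matrix.nonsing_inv_mul M ((Matrix.isUnit_iff_isUnit_det M).mp hM)
    have := congrArg (M⁻¹.mulVec) hxy
    simpa [Matrix.mulVecLin_apply, Matrix.mulVec_mulVec, h1] using this
  -- restriction of M to 𝒲
  let f : 𝒲 →ₗ[ℂ] 𝒲 := M.mulVecLin.restrict (fun w hw => hM𝒲 w hw)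
  have hfinj : Function.Injective f := by
    intro x y hxy
    apply Subtype.ext
    apply hMinj
    exact congrArg Subtype.val hxy
  have hfsurj : Function.Surjective f :=
    (LinearMap.injective_iff_surjective (f := f)).mp hfinj
  -- τ j complexified lies in 𝒲
  have hτ𝒲 : φ (τ j) ∈ 𝒲 :=
    Submodule.subset_span ⟨τ j, hτ𝒱 j hj1 hj2, rfl⟩
  obtain ⟨⟨w, hw𝒲⟩, hfw⟩ := hfsurj ⟨φ (τ j), hτ𝒲⟩
  have hMw : M.mulVec w = φ (τ j) := congrArg Subtype.val hfw
  -- invert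
  have h2 : M * M⁻¹ = 1 := Matrix.mul_nonsing_inv M ((Matrix.isUnit_iff_isUnit_det M).mp hM)
  have h1 : M⁻¹ * M = 1 := Matrix.nonsing_inv_mul M ((Matrix.isUnit_iff_isUnit_det M).mp hM)
  have hinvτ : M⁻¹.mulVec (φ (τ j)) = w := by
    rw [← hMw, Matrix.mulVec_mulVec, h1, Matrix.one_mulVec]
  -- b perpendicular to 𝒲
  have hbperpℂ : ∀ w ∈ 𝒲, (fun i => (b i : ℂ)) ⬝ᵥ w = 0 := by
    intro w hw
    let g : (Fin s → ℂ) →ₗ[ℂ] ℂ :=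
      { toFun := fun v => (fun i => (b i : ℂ)) ⬝ᵥ v
        map_add' := fun x y => dotProduct_add _ _ _
        map_smul' := fun r x => by simp [dotProduct_smul] }
    have hg : ∀ v ∈ 𝒲, g v = 0 := by
      intro v hv
      refine Submodule.span_induction ?_ ?_ ?_ ?_ hv
      · rintro _ ⟨x, hx, rfl⟩
        have : g (φ x) = ((b ⬝ᵥ x : ℝ) : ℂ) := by
          simp [g, φ, dotProduct]
        rw [this, hbperp x hx, Complex.ofReal_zero]
      · simp [g]
      · intro x y _ _ hx hy; simp [map_add, hx, hy]
      · intro a x _ hx; simp [_root_.map_smul, hx]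
    exact hg w hw
  have : (fun i => (b i : ℂ)) ⬝ᵥ M⁻¹.mulVec (fun i => ((τ j i : ℝ) : ℂ)) = 0 := by
    have : (fun i => ((τ j i : ℝ) : ℂ)) = φ (τ j) := rfl
    rw [this, hinvτ]
    exact hbperpℂ w hw𝒲
  rw [this, mul_zero]
end
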